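/- arXiv:2209.11076 — 3 statements merged into one kernel-verified Lean document; each statement's English description precedes it below -/
import Mathlib

section
/- Boltzmann ergotropy dominates observational ergotropy: with pᵢ = tr[Pᵢρ], Σᵢ pᵢ tr[H πᵢ] ≤ tr[H π_cg], where πᵢ is the passive state for (Pᵢ/Vᵢ, H) and π_cg is the passive state for (ρ_cg, H) with ρ_cg = Σᵢ (pᵢ/Vᵢ) Pᵢ. Hence W_C^B(ρ) = tr[H(ρ − Σᵢ pᵢπᵢ)] ≥ W_C(ρ) = tr[H(ρ − π_cg)]. -/
/-!
The minimal energy `min_U tr[H U σ U†]` is concave in `σ`: evaluating the coarse-grained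
state `ρ_cg = Σᵢ pᵢ (Pᵢ/Vᵢ)` at the unitary that attains its minimum splits the energy into
`Σᵢ pᵢ tr[H U (Pᵢ/Vᵢ) U†]`, and each summand is at least the passive energy `tr[H πᵢ]`
because `pᵢ = tr[Pᵢ ρ Pᵢ] ≥ 0`. The ergotropy comparison is the same inequality after
subtracting both sides from `tr[H ρ]`.
-/

open Matrix Finset
open scoped ComplexOrder

theorem sum_mul_le_of_isLeast_image {α ι : Type*} [Fintype ι] {S : Set α} (f : ι → α → ℝ)
    {w m : ι → ℝ} (hw : ∀ i, 0 ≤ w i) (hm : ∀ i, IsLeast (f i '' S) (m i)) {M : ℝ}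
    (hM : IsLeast ((fun a => ∑ i, w i * f i a) '' S) M) :
    ∑ i, w i * m i ≤ M := by
  obtain ⟨a, ha, rfl⟩ := hM.1
  exact sum_le_sum fun i _ => mul_le_mul_of_nonneg_left ((hm i).2 ⟨a, ha, rfl⟩) (hw i)

theorem Matrix.PosSemidef.trace_mul_nonneg_of_isStarProjection {n 𝕜 : Type*} [Fintype n]
    [RCLike 𝕜] {ρ P : Matrix n n 𝕜} (hρ : ρ.PosSemidef) (hP : Pᴴ = P) (hPP : P * P = P) :
    0 ≤ (P * ρ).trace := by
  have := (hρ.conjTranspose_mul_mul_same P).trace_nonneg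
  rwa [hP, trace_mul_cycle, hPP] at this

theorem re_trace_mul_sum_smul {n ι : Type*} [Fintype n] [Fintype ι] (H : Matrix n n ℂ)
    (c : ι → ℝ) (A : ι → Matrix n n ℂ) :
    (H * ∑ i, (c i : ℂ) • A i).trace.re = ∑ i, c i * (H * A i).trace.re := by
  simp [Matrix.mul_sum, trace_sum, Complex.re_sum]

theorem re_trace_mul_conj_sum_smul {n ι : Type*} [Fintype n] [Fintype ι] (H U : Matrix n n ℂ)
    (c : ι → ℝ) (A : ι → Matrix n n ℂ) :
    (H * (U * (∑ i, (c i : ℂ) • A i) * Uᴴ)).trace.re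
      = ∑ i, c i * (H * (U * A i * Uᴴ)).trace.re := by
  rw [Matrix.mul_sum, Matrix.sum_mul, ← re_trace_mul_sum_smul]
  simp only [Matrix.mul_smul, Matrix.smul_mul]

theorem stmt11_general {d : ℕ} {ι : Type*} [Fintype ι]
    (H ρ : Matrix (Fin d) (Fin d) ℂ)
    (hρ : ρ.PosSemidef)
    (P : ι → Matrix (Fin d) (Fin d) ℂ) (V : ι → ℕ)
    (hherm : ∀ i, (P i)ᴴ = P i) (hidem : ∀ i, P i * P i = P i)
    (πi : ι → Matrix (Fin d) (Fin d) ℂ) (πcg : Matrix (Fin d) (Fin d) ℂ)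
    (hπi : ∀ i, IsLeast {x : ℝ | ∃ U ∈ Matrix.unitaryGroup (Fin d) ℂ,
        (H * (U * ((V i : ℂ)⁻¹ • P i) * Uᴴ)).trace.re = x} ((H * πi i).trace.re))
    (hπcg : IsLeast {x : ℝ | ∃ U ∈ Matrix.unitaryGroup (Fin d) ℂ,
        (H * (U * (∑ i, ((P i * ρ).trace / (V i : ℂ)) • P i) * Uᴴ)).trace.re = x}
      ((H * πcg).trace.re)) :
    (∑ i, (P i * ρ).trace.re * (H * πi i).trace.re) ≤ (H * πcg).trace.re ∧
    (H * (ρ - ∑ i, ((P i * ρ).trace.re : ℂ) • πi i)).trace.re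
      ≥ (H * (ρ - πcg)).trace.re := by
  have hp : ∀ i, 0 ≤ (P i * ρ).trace := fun i =>
    hρ.trace_mul_nonneg_of_isStarProjection (hherm i) (hidem i)
  have hρcg : ∑ i, ((P i * ρ).trace / (V i : ℂ)) • P i
      = ∑ i, ((P i * ρ).trace.re : ℂ) • ((V i : ℂ)⁻¹ • P i) := by
    refine sum_congr rfl fun i _ => ?_
    rw [smul_smul, div_eq_mul_inv, ← Complex.eq_re_of_ofReal_le (r := 0) (by simpa using hp i)]
  have hmin : ∑ i, (P i * ρ).trace.re * (H * πi i).trace.re ≤ (H * πcg).trace.re := by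
    rw [hρcg] at hπcg
    simp only [re_trace_mul_conj_sum_smul] at hπcg
    exact sum_mul_le_of_isLeast_image _ (fun i => (Complex.nonneg_iff.1 (hp i)).1) hπi hπcg
  refine ⟨hmin, ?_⟩
  rw [ge_iff_le, Matrix.mul_sub, Matrix.mul_sub, trace_sub, trace_sub, Complex.sub_re,
    Complex.sub_re, re_trace_mul_sum_smul]
  linarith

/-- Boltzmann ergotropy dominates observational ergotropy:
with `pᵢ = tr[Pᵢρ]`, `Σᵢ pᵢ tr[Hπᵢ] ≤ tr[Hπ_cg]`, where `πᵢ` is the passive state for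
`(Pᵢ/Vᵢ, H)` (i.e. it attains `min_U tr[H U (Pᵢ/Vᵢ) U†]`) and `π_cg` is the passive state
for `(ρ_cg, H)` with `ρ_cg = Σᵢ (pᵢ/Vᵢ)Pᵢ`. Hence
`W_C^B(ρ) = tr[H(ρ − Σᵢ pᵢπᵢ)] ≥ W_C(ρ) = tr[H(ρ − π_cg)]`. -/
theorem stmt11 {d : ℕ} {ι : Type*} [Fintype ι]
    (H ρ : Matrix (Fin d) (Fin d) ℂ) (hH : H.IsHermitian)
    (hρ : ρ.PosSemidef) (hτ : ρ.trace = 1)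
    (P : ι → Matrix (Fin d) (Fin d) ℂ) (V : ι → ℕ)
    (hherm : ∀ i, (P i)ᴴ = P i) (hidem : ∀ i, P i * P i = P i)
    (horth : ∀ i j, i ≠ j → P i * P j = 0) (hcompl : ∑ i, P i = 1)
    (hV : ∀ i, (P i).trace = (V i : ℂ)) (hVpos : ∀ i, 0 < V i)
    (πi : ι → Matrix (Fin d) (Fin d) ℂ) (πcg : Matrix (Fin d) (Fin d) ℂ)
    (hπi : ∀ i, IsLeast {x : ℝ | ∃ U ∈ Matrix.unitaryGroup (Fin d) ℂ,
        (H * (U * ((V i : ℂ)⁻¹ • P i) * Uᴴ)).trace.re = x} ((H * πi i).trace.re))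
    (hπcg : IsLeast {x : ℝ | ∃ U ∈ Matrix.unitaryGroup (Fin d) ℂ,
        (H * (U * (∑ i, ((P i * ρ).trace / (V i : ℂ)) • P i) * Uᴴ)).trace.re = x}
      ((H * πcg).trace.re)) :
    (∑ i, (P i * ρ).trace.re * (H * πi i).trace.re) ≤ (H * πcg).trace.re ∧
    (H * (ρ - ∑ i, ((P i * ρ).trace.re : ℂ) • πi i)).trace.re
      ≥ (H * (ρ - πcg)).trace.re :=
  stmt11_general H ρ hρ P V hherm hidem πi πcg hπi hπcg
end

section
/- Observational entropy upper-bounds von Neumann entropy: for any density matrix ρ and complete family of orthogonal projectors {Pᵢ}, S(ρ) ≤ S_C(ρ) = −Σᵢ pᵢ log(pᵢ/Vᵢ), with pᵢ = tr[Pᵢρ], Vᵢ = tr[Pᵢ]. -/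
/-!
Diagonalise `ρ = ∑ₖ λₖ |vₖ⟩⟨vₖ|` and put `aᵢₖ = ⟨vₖ, Pᵢ vₖ⟩ ≥ 0`. Then `∑ᵢ aᵢₖ = 1`,
`∑ₖ aᵢₖ = Vᵢ` and `pᵢ = ∑ₖ aᵢₖ λₖ`, so `pᵢ / Vᵢ` is a convex combination of the `λₖ`.
Jensen's inequality for the concave `η(x) = -x log x` gives `Vᵢ η(pᵢ / Vᵢ) ≥ ∑ₖ aᵢₖ η(λₖ)`,
and summing over `i` yields `S(ρ) = ∑ₖ η(λₖ) ≤ ∑ᵢ Vᵢ η(pᵢ / Vᵢ) = S_C(ρ)`.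
-/

open Matrix
open scoped ComplexOrder

/-- Von Neumann entropy `S(ρ) = −tr[ρ log ρ]`, computed via the eigenvalues of `ρ`
(junk value `0` if `ρ` is not Hermitian). -/
noncomputable def vnEntropy {d : ℕ} (ρ : Matrix (Fin d) (Fin d) ℂ) : ℝ :=
  if h : ρ.IsHermitian then -∑ i, h.eigenvalues i * Real.log (h.eigenvalues i) else 0

open Finset

namespace Real

-- Also at `v = 0`, where `p / 0 = 0` and `log 0 = 0`.
lemma mul_negMulLog_div (p v : ℝ) : v * negMulLog (p / v) = -(p * log (p / v)) := by
  rcases eq_or_ne v 0 with rfl | hv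
  · simp
  · rw [negMulLog]; field_simp

lemma sum_mul_negMulLog_le {κ : Type*} [Fintype κ] (w l : κ → ℝ) (hw : ∀ k, 0 ≤ w k)
    (hl : ∀ k, 0 ≤ l k) :
    ∑ k, w k * negMulLog (l k) ≤ (∑ k, w k) * negMulLog ((∑ k, w k * l k) / ∑ k, w k) := by
  rcases (sum_nonneg fun k _ => hw k).eq_or_lt with hW | hW
  · have hw0 : ∀ k, w k = 0 := fun k =>
      (sum_eq_zero_iff_of_nonneg fun k _ => hw k).mp hW.symm k (mem_univ k)
    simp [hw0]
  · have := concaveOn_negMulLog.le_map_centerMass (t := univ) (fun k _ => hw k) hW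
      (fun k _ => Set.mem_Ici.mpr (hl k))
    simp only [centerMass, smul_eq_mul, Function.comp_apply] at this
    rwa [inv_mul_eq_div, inv_mul_eq_div, div_le_iff₀' hW] at this

lemma neg_sum_mul_log_le_neg_sum_mul_log_div {ι κ : Type*} [Fintype ι] [Fintype κ]
    (a : ι → κ → ℝ) (l : κ → ℝ) (v : ι → ℝ) (ha : ∀ i k, 0 ≤ a i k) (hl : ∀ k, 0 ≤ l k)
    (hcol : ∀ k, ∑ i, a i k = 1) (hrow : ∀ i, ∑ k, a i k = v i) :
    -∑ k, l k * log (l k) ≤ -∑ i, (∑ k, a i k * l k) * log ((∑ k, a i k * l k) / v i) := by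
  calc -∑ k, l k * log (l k) = ∑ k, negMulLog (l k) := by simp [negMulLog_eq_neg]
    _ = ∑ i, ∑ k, a i k * negMulLog (l k) := by rw [sum_comm]; simp [← sum_mul, hcol]
    _ ≤ ∑ i, v i * negMulLog ((∑ k, a i k * l k) / v i) := sum_le_sum fun i _ => by
      simpa only [hrow] using sum_mul_negMulLog_le (a i) l (ha i) hl
    _ = _ := by simp only [mul_negMulLog_div, sum_neg_distrib]

end Real

namespace Matrix.IsHermitian

variable {𝕜 n : Type*} [RCLike 𝕜] [Fintype n] [DecidableEq n] {A : Matrix n n 𝕜}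
  (hA : A.IsHermitian)

noncomputable def diagInEigenbasis (M : Matrix n n 𝕜) (k : n) : ℝ :=
  RCLike.re ((star (hA.eigenvectorUnitary : Matrix n n 𝕜) * M * hA.eigenvectorUnitary) k k)

lemma re_trace_mul_eq_sum (M : Matrix n n 𝕜) :
    RCLike.re (M * A).trace = ∑ k, hA.diagInEigenbasis M k * hA.eigenvalues k := by
  conv_lhs => rw [hA.spectral_theorem, Unitary.conjStarAlgAut_apply, ← mul_assoc, ← mul_assoc,
    trace_mul_cycle]
  simp only [trace, diag, ← Matrix.mul_assoc, mul_diagonal, Function.comp_apply, map_sum,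
    RCLike.re_mul_ofReal, diagInEigenbasis]

lemma sum_diagInEigenbasis (M : Matrix n n 𝕜) :
    ∑ k, hA.diagInEigenbasis M k = RCLike.re M.trace := by
  simp only [diagInEigenbasis, ← map_sum]
  change RCLike.re
    (star (hA.eigenvectorUnitary : Matrix n n 𝕜) * M * hA.eigenvectorUnitary).trace = _
  rw [trace_mul_cycle, mem_unitaryGroup_iff.mp hA.eigenvectorUnitary.2, one_mul]

lemma diagInEigenbasis_sum {ι : Type*} [Fintype ι] (M : ι → Matrix n n 𝕜) (k : n) :
    hA.diagInEigenbasis (∑ i, M i) k = ∑ i, hA.diagInEigenbasis (M i) k := by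
  simp [diagInEigenbasis, mul_sum, sum_mul, sum_apply]

lemma diagInEigenbasis_one (k : n) : hA.diagInEigenbasis 1 k = 1 := by
  simp [diagInEigenbasis]

lemma diagInEigenbasis_nonneg {M : Matrix n n 𝕜} (hM : M.PosSemidef) (k : n) :
    0 ≤ hA.diagInEigenbasis M k :=
  (RCLike.nonneg_iff.mp (hM.conjTranspose_mul_mul_same _).diag_nonneg).1

end Matrix.IsHermitian

theorem stmt14_general {d : ℕ} {ι : Type*} [Fintype ι]
    (ρ : Matrix (Fin d) (Fin d) ℂ) (hρ : ρ.PosSemidef)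
    (P : ι → Matrix (Fin d) (Fin d) ℂ) (V : ι → ℕ)
    (hherm : ∀ i, (P i)ᴴ = P i) (hidem : ∀ i, P i * P i = P i)
    (hcompl : ∑ i, P i = 1)
    (hV : ∀ i, (P i).trace = (V i : ℂ)) :
    vnEntropy ρ ≤ -∑ i, (P i * ρ).trace.re * Real.log ((P i * ρ).trace.re / (V i : ℝ)) := by
  have hP : ∀ i, (P i).PosSemidef := fun i => by
    simpa only [hherm, hidem] using posSemidef_conjTranspose_mul_self (P i)
  have key := Real.neg_sum_mul_log_le_neg_sum_mul_log_div (fun i => hρ.1.diagInEigenbasis (P i))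
    hρ.1.eigenvalues (fun i => (V i : ℝ)) (fun i => hρ.1.diagInEigenbasis_nonneg (hP i))
    hρ.eigenvalues_nonneg
    (fun k => by rw [← IsHermitian.diagInEigenbasis_sum, hcompl, IsHermitian.diagInEigenbasis_one])
    (fun i => by rw [IsHermitian.sum_diagInEigenbasis, hV]; simp)
  simp only [← hρ.1.re_trace_mul_eq_sum, RCLike.re_to_complex] at key
  rwa [vnEntropy, dif_pos hρ.1]

/-- Observational entropy upper-bounds von Neumann entropy:
`S(ρ) ≤ S_C(ρ) = −Σᵢ pᵢ log(pᵢ/Vᵢ)`, with `pᵢ = tr[Pᵢρ]`, `Vᵢ = tr[Pᵢ]`. -/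
theorem stmt14 {d : ℕ} {ι : Type*} [Fintype ι]
    (ρ : Matrix (Fin d) (Fin d) ℂ) (hρ : ρ.PosSemidef) (hτ : ρ.trace = 1)
    (P : ι → Matrix (Fin d) (Fin d) ℂ) (V : ι → ℕ)
    (hherm : ∀ i, (P i)ᴴ = P i) (hidem : ∀ i, P i * P i = P i)
    (horth : ∀ i j, i ≠ j → P i * P j = 0) (hcompl : ∑ i, P i = 1)
    (hV : ∀ i, (P i).trace = (V i : ℂ)) :
    vnEntropy ρ ≤ -∑ i, (P i * ρ).trace.re * Real.log ((P i * ρ).trace.re / (V i : ℝ)) :=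
  stmt14_general ρ hρ P V hherm hidem hcompl hV
end

section
/- Energy estimate for bipartite local-energy coarse-graining: let H = H₁⊗I + I⊗H₂ + H_int on ℂ^{d₁}⊗ℂ^{d₂}, and let ρ_cg be the coarse-grained state for the coarse-graining by products of spectral projectors of H₁ and H₂ onto energy windows of width ΔE. Then |tr[Hρ] − tr[Hρ_cg]| ≤ 2‖H_int‖ + 2ΔE for every density matrix ρ, where ‖·‖ is the operator norm. -/
open Matrix Kronecker
open scoped ComplexOrder

/-- The spectral projector of `W (diag e) W†` onto the group of eigenvectors labelled by
window `m` (eigenvector `k` belongs to window `g k`). -/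
noncomputable def specProj {d : ℕ} {ι : Type*} [DecidableEq ι]
    (W : Matrix.unitaryGroup (Fin d) ℂ) (g : Fin d → ι) (m : ι) :
    Matrix (Fin d) (Fin d) ℂ :=
  (W : Matrix (Fin d) (Fin d) ℂ) *
    Matrix.diagonal (fun k : Fin d => if g k = m then (1 : ℂ) else 0) *
    (W : Matrix (Fin d) (Fin d) ℂ)ᴴ

/-- A Hermitian matrix presented by its spectral data: `W (diag e) W†`. -/
noncomputable def diagH {d : ℕ} (W : Matrix.unitaryGroup (Fin d) ℂ) (e : Fin d → ℝ) :
    Matrix (Fin d) (Fin d) ℂ :=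
  (W : Matrix (Fin d) (Fin d) ℂ) * Matrix.diagonal (fun k : Fin d => (e k : ℂ)) *
    (W : Matrix (Fin d) (Fin d) ℂ)ᴴ

/-! In the product eigenbasis `W₁ ⊗ W₂` the local Hamiltonian `H₁ ⊗ 1 + 1 ⊗ H₂` and `ρ_cg` are
both diagonal, and `ρ_cg` spreads the weight `ρ` gives to each block of eigenvectors uniformly over
that block. On a block the local energy lies in `[E₁' + E₂', E₁' + E₂' + 2ΔE]`; both states give
the block level the same expectation, and the excess over it has expectations in `[0, 2ΔE]` in
either state, so the local parts differ by at most `2ΔE`. The interaction contributes at most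
`‖H_int‖` for each state, since `|tr[A σ]| ≤ ‖A‖ tr σ` for `σ ≥ 0`. -/

open Finset

section
variable {α β K : Type*} [Fintype α] [DecidableEq β] [Semifield K]

def fiberAvg (G : α → β) (r : α → K) (i : α) : K :=
  (∑ j with G j = G i, r j) / #{j | G j = G i}

theorem map_fiberAvg {L : Type*} [Semifield L] (f : K →+* L) (G : α → β) (r : α → K) (i : α) :
    f (fiberAvg G r i) = fiberAvg G (fun j => f (r j)) i := by
  simp [fiberAvg, map_div₀]

theorem fiberAvg_nonneg [PartialOrder K] [IsOrderedRing K] [PosMulReflectLT K] (G : α → β)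
    {r : α → K} (hr : ∀ i, 0 ≤ r i) (i : α) : 0 ≤ fiberAvg G r i :=
  div_nonneg (sum_nonneg fun j _ => hr j) (Nat.cast_nonneg _)

theorem sum_fiber_fiberAvg [CharZero K] (G : α → β) (r : α → K) (m : β) :
    ∑ i with G i = m, fiberAvg G r i = ∑ i with G i = m, r i := by
  rcases eq_empty_or_nonempty {i | G i = m} with h | h
  · simp [h]
  have hcard : (#{i | G i = m} : K) ≠ 0 := by exact_mod_cast h.card_pos.ne'
  rw [sum_congr rfl fun i hi => by rw [fiberAvg, (mem_filter.mp hi).2], sum_const, nsmul_eq_mul,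
    mul_div_cancel₀ _ hcard]

theorem sum_fiberAvg [Fintype β] [CharZero K] (G : α → β) (r : α → K) :
    ∑ i, fiberAvg G r i = ∑ i, r i := by
  rw [← sum_fiberwise univ G r, ← sum_fiberwise univ G]
  exact sum_congr rfl fun m _ => sum_fiber_fiberAvg G r m

theorem abs_sum_mul_sub_le_of_sum_fiber_eq [Fintype β] (G : α → β) {a : β → ℝ} {c : ℝ}
    {F r q : α → ℝ} (hF : ∀ i, a (G i) ≤ F i ∧ F i ≤ a (G i) + c) (hr : ∀ i, 0 ≤ r i)
    (hq : ∀ i, 0 ≤ q i) (hfiber : ∀ m, ∑ i with G i = m, r i = ∑ i with G i = m, q i) :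
    |∑ i, F i * (r i - q i)| ≤ c * ∑ i, r i := by
  have hlevel (w : α → ℝ) : ∑ i, a (G i) * w i = ∑ m, a m * ∑ i with G i = m, w i := by
    rw [← sum_fiberwise univ G]
    refine sum_congr rfl fun m _ => ?_
    rw [mul_sum]
    exact sum_congr rfl fun i hi => by rw [(mem_filter.mp hi).2]
  have hqr : ∑ i, q i = ∑ i, r i := by
    rw [← sum_fiberwise univ G r, ← sum_fiberwise univ G q]
    exact sum_congr rfl fun m _ => (hfiber m).symm
  have hexcess {w : α → ℝ} (hw : ∀ i, 0 ≤ w i) :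
      0 ≤ ∑ i, (F i - a (G i)) * w i ∧ ∑ i, (F i - a (G i)) * w i ≤ c * ∑ i, w i := by
    refine ⟨sum_nonneg fun i _ => mul_nonneg (by linarith [hF i]) (hw i), ?_⟩
    rw [mul_sum]
    exact sum_le_sum fun i _ => mul_le_mul_of_nonneg_right (by linarith [hF i]) (hw i)
  have hsplit : ∑ i, F i * (r i - q i)
      = ∑ i, (F i - a (G i)) * r i - ∑ i, (F i - a (G i)) * q i := by
    have hlevels : ∑ i, a (G i) * r i = ∑ i, a (G i) * q i := by
      simp only [hlevel, hfiber]
    simp only [sub_mul, mul_sub, sum_sub_distrib, hlevels]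
    ring
  obtain ⟨hr0, hrc⟩ := hexcess hr
  obtain ⟨hq0, hqc⟩ := hexcess hq
  rw [hqr] at hqc
  rw [hsplit, abs_sub_le_iff]
  constructor <;> linarith

end

section
variable {R l m n : Type*} [CommSemiring R] [StarRing R] [Fintype l] [Fintype m]
  [DecidableEq l] [DecidableEq m] [Fintype n] [DecidableEq n]

theorem trace_conj_diagonal_mul (U : Matrix n n R) (f : n → R) (M : Matrix n n R) :
    (U * diagonal f * Uᴴ * M).trace = ∑ i, f i * (Uᴴ * M * U) i i := by
  rw [show U * diagonal f * Uᴴ * M = U * (diagonal f * (Uᴴ * M)) by simp only [Matrix.mul_assoc],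
    trace_mul_comm, Matrix.mul_assoc]
  simp [trace, diagonal_mul]

theorem conj_diagonal_kronecker (A : Matrix l l R) (B : Matrix m m R) (f : l → R) (g : m → R) :
    (A * diagonal f * Aᴴ) ⊗ₖ (B * diagonal g * Bᴴ)
      = (A ⊗ₖ B) * diagonal (fun i => f i.1 * g i.2) * (A ⊗ₖ B)ᴴ := by
  rw [conjTranspose_kronecker, mul_kronecker_mul, mul_kronecker_mul, diagonal_kronecker_diagonal]

end

section
variable {𝕜 n β : Type*} [RCLike 𝕜] [Fintype n] [DecidableEq n]

theorem norm_dotProduct_mulVec_le (A : Matrix n n 𝕜) (v : n → 𝕜) :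
    ‖(A *ᵥ v) ⬝ᵥ star v‖ ≤ ‖toEuclideanCLM (𝕜 := 𝕜) A‖ * ‖WithLp.toLp 2 v‖ ^ 2 := by
  calc ‖(A *ᵥ v) ⬝ᵥ star v‖
      = ‖inner 𝕜 (WithLp.toLp 2 v) (toEuclideanCLM (𝕜 := 𝕜) A (WithLp.toLp 2 v))‖ := rfl
    _ ≤ ‖WithLp.toLp 2 v‖ * (‖toEuclideanCLM (𝕜 := 𝕜) A‖ * ‖WithLp.toLp 2 v‖) :=
      (norm_inner_le_norm _ _).trans (by gcongr; exact ContinuousLinearMap.le_opNorm _ _)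
    _ = _ := by ring

theorem norm_trace_mul_le_of_posSemidef (A σ : Matrix n n 𝕜) (hσ : σ.PosSemidef) :
    ‖(A * σ).trace‖ ≤ ‖toEuclideanCLM (𝕜 := 𝕜) A‖ * RCLike.re σ.trace := by
  obtain ⟨m, v, rfl⟩ := Matrix.posSemidef_iff_eq_sum_vecMulVec.mp hσ
  have hnorm (i : Fin m) : RCLike.re (v i ⬝ᵥ star (v i)) = ‖WithLp.toLp 2 (v i)‖ ^ 2 := by
    rw [← EuclideanSpace.inner_toLp_toLp, inner_self_eq_norm_sq_to_K]
    norm_cast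
  rw [mul_sum, trace_sum, trace_sum, map_sum, mul_sum]
  simp only [mul_vecMulVec, trace_vecMulVec, hnorm]
  exact (norm_sum_le _ _).trans (sum_le_sum fun i _ => norm_dotProduct_mulVec_le A (v i))

theorem trace_conjTranspose_mul_mul {U : Matrix n n 𝕜} (hU : U ∈ unitaryGroup n 𝕜)
    (M : Matrix n n 𝕜) : (Uᴴ * M * U).trace = M.trace := by
  have hU' : U * Uᴴ = 1 := hU.2
  rw [trace_mul_cycle, hU', Matrix.one_mul]

variable [DecidableEq β]

noncomputable def blockProj (U : Matrix n n 𝕜) (G : n → β) (m : β) : Matrix n n 𝕜 :=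
  U * diagonal (fun i => if G i = m then 1 else 0) * Uᴴ

theorem kronecker_blockProj {n' β' : Type*} [Fintype n'] [DecidableEq n'] [DecidableEq β']
    (A : Matrix n n 𝕜) (B : Matrix n' n' 𝕜) (G : n → β) (G' : n' → β') (m : β) (m' : β') :
    blockProj A G m ⊗ₖ blockProj B G' m' = blockProj (A ⊗ₖ B) (Prod.map G G') (m, m') := by
  simp only [blockProj, conj_diagonal_kronecker, ite_zero_mul_ite_zero, one_mul, Prod.map,
    Prod.mk.injEq]

theorem trace_blockProj_mul (U : Matrix n n 𝕜) (G : n → β) (m : β) (M : Matrix n n 𝕜) :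
    (blockProj U G m * M).trace = ∑ i with G i = m, (Uᴴ * M * U) i i := by
  simp only [blockProj, trace_conj_diagonal_mul, ite_mul, one_mul, zero_mul, sum_ite,
    sum_const_zero, add_zero]

theorem trace_blockProj {U : Matrix n n 𝕜} (hU : Uᴴ * U = 1) (G : n → β) (m : β) :
    (blockProj U G m).trace = #{i | G i = m} := by
  simpa [Matrix.mul_assoc, hU] using trace_blockProj_mul U G m 1

variable [Fintype β]

noncomputable def coarseGrain (U : Matrix n n 𝕜) (G : n → β) (ρ : Matrix n n 𝕜) : Matrix n n 𝕜 :=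
  ∑ m, ((blockProj U G m * ρ).trace / (blockProj U G m).trace) • blockProj U G m

theorem coarseGrain_eq {U : Matrix n n 𝕜} (hU : Uᴴ * U = 1) (G : n → β) (ρ : Matrix n n 𝕜) :
    coarseGrain U G ρ = U * diagonal (fiberAvg G fun i => (Uᴴ * ρ * U) i i) * Uᴴ := by
  have hterm (m : β) (c : 𝕜) :
      c • blockProj U G m = U * diagonal (fun i => if G i = m then c else 0) * Uᴴ := by
    rw [blockProj, ← Matrix.smul_mul, ← Matrix.mul_smul, ← diagonal_smul]
    congr 3
    ext i
    simp
  simp only [coarseGrain, trace_blockProj_mul, trace_blockProj hU, hterm, ← mul_sum, ← sum_mul]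
  congr 2
  ext i j
  simp only [Matrix.sum_apply, diagonal_apply]
  split_ifs <;> simp [*, fiberAvg]

theorem conjTranspose_mul_coarseGrain_mul {U : Matrix n n 𝕜} (hU : Uᴴ * U = 1) (G : n → β)
    (ρ : Matrix n n 𝕜) :
    Uᴴ * coarseGrain U G ρ * U = diagonal (fiberAvg G fun i => (Uᴴ * ρ * U) i i) := by
  simp only [coarseGrain_eq hU, ← Matrix.mul_assoc, hU, Matrix.one_mul]
  rw [Matrix.mul_assoc, hU, Matrix.mul_one]

theorem trace_coarseGrain {U : Matrix n n 𝕜} (hU : U ∈ unitaryGroup n 𝕜) (G : n → β)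
    (ρ : Matrix n n 𝕜) : (coarseGrain U G ρ).trace = ρ.trace := by
  rw [← trace_conjTranspose_mul_mul hU, conjTranspose_mul_coarseGrain_mul hU.1, trace_diagonal,
    sum_fiberAvg]
  exact trace_conjTranspose_mul_mul hU ρ

theorem posSemidef_coarseGrain {U : Matrix n n 𝕜} (hU : Uᴴ * U = 1) (G : n → β)
    {ρ : Matrix n n 𝕜} (hρ : ρ.PosSemidef) : (coarseGrain U G ρ).PosSemidef := by
  rw [coarseGrain_eq hU]
  refine (posSemidef_diagonal_iff.mpr fun i => ?_).mul_mul_conjTranspose_same U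
  exact fiberAvg_nonneg G (fun j => (hρ.conjTranspose_mul_mul_same U).diag_nonneg) i

theorem norm_trace_mul_sub_coarseGrain_le (A : Matrix n n 𝕜) {U : Matrix n n 𝕜}
    (hU : U ∈ unitaryGroup n 𝕜) (G : n → β) {ρ : Matrix n n 𝕜} (hρ : ρ.PosSemidef) :
    ‖(A * (ρ - coarseGrain U G ρ)).trace‖
      ≤ 2 * ‖toEuclideanCLM (𝕜 := 𝕜) A‖ * RCLike.re ρ.trace := by
  rw [Matrix.mul_sub, trace_sub]
  calc _ ≤ ‖(A * ρ).trace‖ + ‖(A * coarseGrain U G ρ).trace‖ := norm_sub_le _ _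
    _ ≤ ‖toEuclideanCLM (𝕜 := 𝕜) A‖ * RCLike.re ρ.trace
          + ‖toEuclideanCLM (𝕜 := 𝕜) A‖ * RCLike.re (coarseGrain U G ρ).trace :=
      add_le_add (norm_trace_mul_le_of_posSemidef A ρ hρ)
        (norm_trace_mul_le_of_posSemidef A _ (posSemidef_coarseGrain hU.1 G hρ))
    _ = _ := by rw [trace_coarseGrain hU]; ring

theorem norm_trace_conj_diagonal_mul_sub_coarseGrain_le {U : Matrix n n 𝕜}
    (hU : U ∈ unitaryGroup n 𝕜) (G : n → β) {a : β → ℝ} {c : ℝ} {F : n → ℝ}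
    (hF : ∀ i, a (G i) ≤ F i ∧ F i ≤ a (G i) + c) {ρ : Matrix n n 𝕜} (hρ : ρ.PosSemidef) :
    ‖(U * diagonal (fun i => (F i : 𝕜)) * Uᴴ * (ρ - coarseGrain U G ρ)).trace‖
      ≤ c * RCLike.re ρ.trace := by
  set σ := Uᴴ * ρ * U with hσdef
  have hσ : σ.PosSemidef := hρ.conjTranspose_mul_mul_same U
  set r : n → ℝ := fun i => RCLike.re (σ i i)
  have hσr (i : n) : σ i i = r i := (hσ.isHermitian.coe_re_apply_self i).symm
  have hr (i : n) : 0 ≤ r i := RCLike.ofReal_nonneg.mp (hσr i ▸ hσ.diag_nonneg)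
  have htrace : RCLike.re ρ.trace = ∑ i, r i := by
    rw [← trace_conjTranspose_mul_mul hU, trace, map_sum]
    rfl
  have hdiag : (fiberAvg G fun i => σ i i) = fun i => ((fiberAvg G r i : ℝ) : 𝕜) := by
    simp only [hσr]
    exact funext fun i => (map_fiberAvg (algebraMap ℝ 𝕜) G r i).symm
  rw [Matrix.mul_sub, trace_sub, trace_conj_diagonal_mul, trace_conj_diagonal_mul,
    conjTranspose_mul_coarseGrain_mul hU.1, ← hσdef, hdiag, ← sum_sub_distrib, htrace]
  simp only [diagonal_apply_eq, hσr, ← mul_sub, ← RCLike.ofReal_sub, ← RCLike.ofReal_mul,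
    ← RCLike.ofReal_sum, RCLike.norm_ofReal]
  exact abs_sum_mul_sub_le_of_sum_fiber_eq G hF hr (fiberAvg_nonneg G hr)
    fun m => (sum_fiber_fiberAvg G r m).symm

end

theorem specProj_eq_blockProj {d : ℕ} {ι : Type*} [DecidableEq ι]
    (W : unitaryGroup (Fin d) ℂ) (g : Fin d → ι) (m : ι) :
    specProj W g m = blockProj (W : Matrix (Fin d) (Fin d) ℂ) g m :=
  rfl

theorem diagH_kronecker_one_add_one_kronecker_diagH {d₁ d₂ : ℕ}
    (W₁ : unitaryGroup (Fin d₁) ℂ) (W₂ : unitaryGroup (Fin d₂) ℂ) (e₁ : Fin d₁ → ℝ)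
    (e₂ : Fin d₂ → ℝ) :
    diagH W₁ e₁ ⊗ₖ (1 : Matrix (Fin d₂) (Fin d₂) ℂ)
        + (1 : Matrix (Fin d₁) (Fin d₁) ℂ) ⊗ₖ diagH W₂ e₂
      = ((W₁ : Matrix (Fin d₁) (Fin d₁) ℂ) ⊗ₖ (W₂ : Matrix (Fin d₂) (Fin d₂) ℂ))
          * diagonal (fun i => ((e₁ i.1 + e₂ i.2 : ℝ) : ℂ))
          * ((W₁ : Matrix (Fin d₁) (Fin d₁) ℂ) ⊗ₖ (W₂ : Matrix (Fin d₂) (Fin d₂) ℂ))ᴴ := by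
  have hone {d : ℕ} (W : unitaryGroup (Fin d) ℂ) :
      (1 : Matrix (Fin d) (Fin d) ℂ)
        = (W : Matrix (Fin d) (Fin d) ℂ) * diagonal (fun _ => 1)
          * (W : Matrix (Fin d) (Fin d) ℂ)ᴴ := by
    rw [diagonal_one, Matrix.mul_one]
    exact W.2.2.symm
  rw [diagH, diagH, hone W₁, hone W₂, conj_diagonal_kronecker, conj_diagonal_kronecker,
    ← Matrix.add_mul, ← Matrix.mul_add, diagonal_add]
  congr 3
  funext i
  simp

theorem stmt16_general {d₁ d₂ : ℕ} {ι₁ ι₂ : Type*}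
    [Fintype ι₁] [DecidableEq ι₁] [Fintype ι₂] [DecidableEq ι₂]
    (W₁ : Matrix.unitaryGroup (Fin d₁) ℂ) (W₂ : Matrix.unitaryGroup (Fin d₂) ℂ)
    (e₁ : Fin d₁ → ℝ) (e₂ : Fin d₂ → ℝ)
    (g₁ : Fin d₁ → ι₁) (g₂ : Fin d₂ → ι₂)
    (E₁' : ι₁ → ℝ) (E₂' : ι₂ → ℝ) (ΔE : ℝ)
    (hwin₁ : ∀ k, E₁' (g₁ k) ≤ e₁ k ∧ e₁ k < E₁' (g₁ k) + ΔE)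
    (hwin₂ : ∀ k, E₂' (g₂ k) ≤ e₂ k ∧ e₂ k < E₂' (g₂ k) + ΔE)
    (Hint ρ : Matrix (Fin d₁ × Fin d₂) (Fin d₁ × Fin d₂) ℂ)
    (hρ : ρ.PosSemidef) (hτ : ρ.trace = 1)
    (H : Matrix (Fin d₁ × Fin d₂) (Fin d₁ × Fin d₂) ℂ)
    (hHdef : H = diagH W₁ e₁ ⊗ₖ (1 : Matrix (Fin d₂) (Fin d₂) ℂ)
        + (1 : Matrix (Fin d₁) (Fin d₁) ℂ) ⊗ₖ diagH W₂ e₂ + Hint)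
    (ρcg : Matrix (Fin d₁ × Fin d₂) (Fin d₁ × Fin d₂) ℂ)
    (hcg : ρcg = ∑ m₁ : ι₁, ∑ m₂ : ι₂,
        (((specProj W₁ g₁ m₁ ⊗ₖ specProj W₂ g₂ m₂) * ρ).trace /
            (specProj W₁ g₁ m₁ ⊗ₖ specProj W₂ g₂ m₂).trace) •
          (specProj W₁ g₁ m₁ ⊗ₖ specProj W₂ g₂ m₂)) :
    ‖(H * (ρ - ρcg)).trace‖
      ≤ 2 * ‖Matrix.toEuclideanCLM (𝕜 := ℂ) Hint‖ + 2 * ΔE := by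
  have hU : (W₁ : Matrix (Fin d₁) (Fin d₁) ℂ) ⊗ₖ (W₂ : Matrix (Fin d₂) (Fin d₂) ℂ)
      ∈ unitaryGroup _ ℂ :=
    kronecker_mem_unitary W₁.2 W₂.2
  have hρcg : ρcg = coarseGrain ((W₁ : Matrix (Fin d₁) (Fin d₁) ℂ) ⊗ₖ W₂) (Prod.map g₁ g₂) ρ := by
    simp only [hcg, coarseGrain, Fintype.sum_prod_type, specProj_eq_blockProj, kronecker_blockProj]
  have hwin (i : Fin d₁ × Fin d₂) :
      E₁' (g₁ i.1) + E₂' (g₂ i.2) ≤ e₁ i.1 + e₂ i.2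
        ∧ e₁ i.1 + e₂ i.2 ≤ E₁' (g₁ i.1) + E₂' (g₂ i.2) + 2 * ΔE := by
    constructor <;> linarith [hwin₁ i.1, hwin₂ i.2]
  rw [hHdef, hρcg, diagH_kronecker_one_add_one_kronecker_diagH, Matrix.add_mul, trace_add]
  calc _ ≤ 2 * ΔE * RCLike.re ρ.trace
          + 2 * ‖Matrix.toEuclideanCLM (𝕜 := ℂ) Hint‖ * RCLike.re ρ.trace :=
        (norm_add_le _ _).trans <| add_le_add
          (norm_trace_conj_diagonal_mul_sub_coarseGrain_le hU _
            (a := fun m => E₁' m.1 + E₂' m.2) hwin hρ)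
          (norm_trace_mul_sub_coarseGrain_le Hint hU _ hρ)
    _ = _ := by rw [hτ, RCLike.one_re]; ring

/-- Energy estimate for bipartite local-energy coarse-graining:
with `H = H₁⊗I + I⊗H₂ + H_int` and `ρ_cg` the coarse-grained state for the coarse-graining
by products of spectral projectors of `H₁`, `H₂` onto energy windows of width `ΔE`
(each eigenvalue lies in the window it is assigned to), we have
`|tr[Hρ] − tr[Hρ_cg]| ≤ 2‖H_int‖ + 2ΔE` (operator norm). -/
theorem stmt16 {d₁ d₂ : ℕ} {ι₁ ι₂ : Type*}
    [Fintype ι₁] [DecidableEq ι₁] [Fintype ι₂] [DecidableEq ι₂]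
    (W₁ : Matrix.unitaryGroup (Fin d₁) ℂ) (W₂ : Matrix.unitaryGroup (Fin d₂) ℂ)
    (e₁ : Fin d₁ → ℝ) (e₂ : Fin d₂ → ℝ)
    (g₁ : Fin d₁ → ι₁) (g₂ : Fin d₂ → ι₂)
    (E₁' : ι₁ → ℝ) (E₂' : ι₂ → ℝ) (ΔE : ℝ) (hΔE : 0 < ΔE)
    (hwin₁ : ∀ k, E₁' (g₁ k) ≤ e₁ k ∧ e₁ k < E₁' (g₁ k) + ΔE)
    (hwin₂ : ∀ k, E₂' (g₂ k) ≤ e₂ k ∧ e₂ k < E₂' (g₂ k) + ΔE)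
    (Hint ρ : Matrix (Fin d₁ × Fin d₂) (Fin d₁ × Fin d₂) ℂ)
    (hint : Hint.IsHermitian) (hρ : ρ.PosSemidef) (hτ : ρ.trace = 1)
    (H : Matrix (Fin d₁ × Fin d₂) (Fin d₁ × Fin d₂) ℂ)
    (hHdef : H = diagH W₁ e₁ ⊗ₖ (1 : Matrix (Fin d₂) (Fin d₂) ℂ)
        + (1 : Matrix (Fin d₁) (Fin d₁) ℂ) ⊗ₖ diagH W₂ e₂ + Hint)
    (ρcg : Matrix (Fin d₁ × Fin d₂) (Fin d₁ × Fin d₂) ℂ)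
    (hcg : ρcg = ∑ m₁ : ι₁, ∑ m₂ : ι₂,
        (((specProj W₁ g₁ m₁ ⊗ₖ specProj W₂ g₂ m₂) * ρ).trace /
            (specProj W₁ g₁ m₁ ⊗ₖ specProj W₂ g₂ m₂).trace) •
          (specProj W₁ g₁ m₁ ⊗ₖ specProj W₂ g₂ m₂)) :
    ‖(H * (ρ - ρcg)).trace‖
      ≤ 2 * ‖Matrix.toEuclideanCLM (𝕜 := ℂ) Hint‖ + 2 * ΔE :=
  stmt16_general W₁ W₂ e₁ e₂ g₁ g₂ E₁' E₂' ΔE hwin₁ hwin₂ Hint ρ hρ hτ H hHdef ρcg hcg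
end
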